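/- arXiv:2409.00505 — 6 statements merged into one kernel-verified Lean document; each statement's English description precedes it below -/
import Mathlib

section
/- Let p be an odd prime and set f = ⌊log₂ p⌋ and t = 2(2^(f+1) − p). Then 0 < t ≤ 2p, t is not divisible by p, and the 2-adic valuation of t² − 4p² equals f + 4. -/
/-! Since `t + 2p = 2 ^ (f + 2)` and `t - 2p = 4 (2 ^ f - p)`, we get `t² - 4p² = 2 ^ (f + 4) (2 ^ f - p)`,
whose second factor is odd because `p` is odd and `f ≥ 1`. The first identity also gives `p ∤ t`, as an odd
prime cannot divide a power of two. -/

theorem padicValInt_prime_pow_mul {q : ℕ} [Fact q.Prime] (k : ℕ) {m : ℤ} (hm : ¬(q : ℤ) ∣ m) :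
    padicValInt q ((q : ℤ) ^ k * m) = k := by
  have hm0 : m ≠ 0 := by rintro rfl; exact hm (dvd_zero _)
  have hq0 : (q : ℤ) ≠ 0 := by exact_mod_cast (Fact.out : q.Prime).ne_zero
  rw [padicValInt.mul (pow_ne_zero k hq0) hm0, padicValInt.eq_zero_of_not_dvd hm, add_zero,
    ← Nat.cast_pow, padicValInt.of_nat, padicValNat.prime_pow]

theorem Nat.two_pow_log_lt_of_odd {n : ℕ} (hn : Odd n) (h1 : n ≠ 1) : 2 ^ Nat.log 2 n < n := by
  refine (Nat.pow_log_le_self 2 hn.pos.ne').lt_of_ne fun h => h1 ?_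
  have hlog : Nat.log 2 n = 0 := by
    by_contra hne
    exact Nat.not_even_iff_odd.mpr hn (h ▸ Nat.even_pow.mpr ⟨even_two, hne⟩)
  rw [← h, hlog, pow_zero]

theorem Nat.Prime.not_dvd_two_pow_of_odd {p : ℕ} (hp : p.Prime) (hodd : Odd p) (n : ℕ) :
    ¬p ∣ 2 ^ n := fun h => by
  have : p = 2 := (Nat.prime_dvd_prime_iff_eq hp Nat.prime_two).mp (hp.dvd_of_dvd_pow h)
  exact Nat.not_even_iff_odd.mpr hodd (this ▸ even_two)

theorem stmt_1 (p : ℕ) (hp : p.Prime) (hodd : Odd p)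
    (f : ℕ) (hf : f = Nat.log 2 p)
    (t : ℤ) (ht : t = 2 * (2 ^ (f + 1) - (p : ℤ))) :
    0 < t ∧ t ≤ 2 * p ∧ ¬ (p : ℤ) ∣ t ∧
      padicValInt 2 (t ^ 2 - 4 * (p : ℤ) ^ 2) = f + 4 := by
  have hlow : (2 : ℤ) ^ f < p := by
    exact_mod_cast hf ▸ Nat.two_pow_log_lt_of_odd hodd hp.one_lt.ne'
  have hhigh : (p : ℤ) < 2 ^ (f + 1) := by
    exact_mod_cast hf ▸ Nat.lt_pow_succ_log_self one_lt_two p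
  have hf0 : f ≠ 0 := hf ▸ (Nat.log_pos one_lt_two hp.two_le).ne'
  have hsum : t + 2 * p = 2 ^ (f + 2) := by rw [ht]; ring
  have hdiff : t ^ 2 - 4 * (p : ℤ) ^ 2 = 2 ^ (f + 4) * (2 ^ f - p) := by rw [ht]; ring
  have hfactor_odd : Odd ((2 : ℤ) ^ f - p) :=
    (Int.even_pow.mpr ⟨even_two, hf0⟩).sub_odd (by exact_mod_cast hodd)
  refine ⟨by rw [ht]; linarith, by rw [ht, pow_succ]; linarith, fun hdvd => ?_, ?_⟩
  · have h2pow : (p : ℤ) ∣ 2 ^ (f + 2) := hsum ▸ dvd_add hdvd (dvd_mul_left _ _)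
    exact hp.not_dvd_two_pow_of_odd hodd (f + 2) (by exact_mod_cast h2pow)
  · have : Fact (Nat.Prime 2) := ⟨Nat.prime_two⟩
    rw [hdiff]
    exact_mod_cast padicValInt_prime_pow_mul (q := 2) (f + 4)
      (by exact_mod_cast Int.not_even_iff_odd.mpr hfactor_odd ∘ even_iff_two_dvd.mpr)
end

section
/- Let μ ≥ 3, and let a, c be odd integers with 0 < a < 2^(μ−1), |c| < 2^μ, and c² ≡ a² (mod 2^(μ+2)). Then c = a or c = −a. -/
/-!
Write `a = 2m + 1`, `c = 2k + 1` and `x = k - m`, `y = k + m + 1`, so that `c - a = 2x`,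
`c + a = 2y` and `c² - a² = 4xy`. Since `x + y = c` is odd, exactly one of `x`, `y` is odd, and
`2^μ ∣ xy` forces `2^μ` to divide the other one. The bounds on `a` and `c` give `|x|, |y| < 2^μ`,
so that factor vanishes, i.e. `c = a` or `c = -a`.
-/

namespace Int

theorem pow_two_dvd_of_dvd_mul_of_odd {n : ℕ} {x y : ℤ} (hy : Odd y) (h : 2 ^ n ∣ x * y) :
    2 ^ n ∣ x :=
  (isCoprime_two_left.mpr hy).pow_left.dvd_of_dvd_mul_right h

theorem eq_zero_or_eq_zero_of_pow_two_dvd_mul {n : ℕ} {x y : ℤ} (hxy : Odd (x + y))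
    (h : 2 ^ n ∣ x * y) (hx : |x| < 2 ^ n) (hy : |y| < 2 ^ n) : x = 0 ∨ y = 0 := by
  rcases even_or_odd x with hx_even | hx_odd
  · have hy_odd : Odd y := (odd_add'.mp hxy).mpr hx_even
    exact .inl (eq_zero_of_abs_lt_dvd (pow_two_dvd_of_dvd_mul_of_odd hy_odd h) hx)
  · exact .inr (eq_zero_of_abs_lt_dvd (pow_two_dvd_of_dvd_mul_of_odd hx_odd (mul_comm x y ▸ h)) hy)

theorem eq_or_eq_neg_of_sq_sub_sq_dvd {n : ℕ} {a c : ℤ} (ha : Odd a) (hc : Odd c)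
    (ha_lt : |a| < 2 ^ n) (hc_lt : |c| < 2 ^ n) (hdvd : 2 ^ (n + 2) ∣ c ^ 2 - a ^ 2) :
    c = a ∨ c = -a := by
  obtain ⟨m, rfl⟩ := ha
  obtain ⟨k, rfl⟩ := hc
  have hsq : (2 * k + 1) ^ 2 - (2 * m + 1) ^ 2 = 4 * ((k - m) * (k + m + 1)) := by ring
  have hprod : 2 ^ n ∣ (k - m) * (k + m + 1) := by
    rw [hsq, show (2 : ℤ) ^ (n + 2) = 4 * 2 ^ n by ring] at hdvd
    exact (mul_dvd_mul_iff_left (by norm_num)).mp hdvd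
  have hsub : |2 * (k - m)| < 2 * 2 ^ n := by
    calc |2 * (k - m)| = |(2 * k + 1) - (2 * m + 1)| := by ring_nf
      _ ≤ |2 * k + 1| + |2 * m + 1| := abs_sub _ _
      _ < 2 * 2 ^ n := by linarith
  have hadd : |2 * (k + m + 1)| < 2 * 2 ^ n := by
    calc |2 * (k + m + 1)| = |(2 * k + 1) + (2 * m + 1)| := by ring_nf
      _ ≤ |2 * k + 1| + |2 * m + 1| := abs_add_le _ _
      _ < 2 * 2 ^ n := by linarith
  rw [abs_mul, abs_two] at hsub hadd
  have hodd : Odd (k - m + (k + m + 1)) := ⟨k, by ring⟩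
  rcases eq_zero_or_eq_zero_of_pow_two_dvd_mul hodd hprod (by linarith) (by linarith) with h | h
  · left; linarith
  · right; linarith

end Int

theorem stmt_12_general (μ : ℕ) (a c : ℤ)
    (ha_odd : Odd a) (ha_pos : 0 < a) (ha_lt : a < 2 ^ (μ - 1))
    (hc_odd : Odd c) (hc_lt : |c| < 2 ^ μ)
    (hdvd : (2 : ℤ) ^ (μ + 2) ∣ (c ^ 2 - a ^ 2)) :
    c = a ∨ c = -a := by
  have ha_abs : |a| < 2 ^ μ :=
    calc |a| = a := abs_of_pos ha_pos
      _ < 2 ^ (μ - 1) := ha_lt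
      _ ≤ 2 ^ μ := pow_le_pow_right₀ (by norm_num) (Nat.sub_le μ 1)
  exact Int.eq_or_eq_neg_of_sq_sub_sq_dvd ha_odd hc_odd ha_abs hc_lt hdvd

theorem stmt_12 (μ : ℕ) (hμ : 3 ≤ μ) (a c : ℤ)
    (ha_odd : Odd a) (ha_pos : 0 < a) (ha_lt : a < 2 ^ (μ - 1))
    (hc_odd : Odd c) (hc_lt : |c| < 2 ^ μ)
    (hdvd : (2 : ℤ) ^ (μ + 2) ∣ (c ^ 2 - a ^ 2)) :
    c = a ∨ c = -a :=
  stmt_12_general μ a c ha_odd ha_pos ha_lt hc_odd hc_lt hdvd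
end

section
/- Let μ ≥ 3, and let a, c be odd integers with 0 < a < 2^(μ−1) and |c| < 2^μ, such that ν₂(c² − a²) = μ + 1. Then |c| = 2^μ − a. -/
/-! Since `c - a` and `c + a` are even with sum `2c ≡ 2 [ZMOD 4]`, one of them is twice an odd
number, so `2 ^ (μ + 1) ∣ c ^ 2 - a ^ 2` forces `2 ^ μ` to divide the other one. That factor is
nonzero and smaller than `2 ^ (μ + 1)` in absolute value, hence equal to `± 2 ^ μ`; of the four
resulting values of `c`, only `c = ±(2 ^ μ - a)` satisfy `|c| < 2 ^ μ`. -/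

namespace Int

theorem eq_zero_or_eq_or_eq_neg_of_dvd_of_abs_lt_two_mul {n x : ℤ} (hdvd : n ∣ x)
    (hlt : |x| < 2 * n) : x = 0 ∨ x = n ∨ x = -n := by
  obtain ⟨hlo, hhi⟩ := abs_lt.mp hlt
  rcases lt_trichotomy x 0 with hneg | hzero | hpos
  · have := eq_zero_of_abs_lt_dvd (hdvd.add dvd_rfl) (abs_lt.mpr ⟨by linarith, by linarith⟩)
    omega
  · exact .inl hzero
  · have := eq_zero_of_abs_lt_dvd (hdvd.sub dvd_rfl) (abs_lt.mpr ⟨by linarith, by linarith⟩)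
    omega

theorem two_pow_dvd_of_odd_of_two_pow_dvd_mul {x y : ℤ} {k : ℕ} (hx : Odd x)
    (h : 2 ^ k ∣ x * y) : 2 ^ k ∣ y :=
  (isCoprime_two_left.mpr hx).pow_left.dvd_of_dvd_mul_left h

theorem two_pow_succ_dvd_sub_or_add_of_odd {a c : ℤ} {k : ℕ} (ha : Odd a) (hc : Odd c)
    (h : 2 ^ (k + 2) ∣ c ^ 2 - a ^ 2) : 2 ^ (k + 1) ∣ c - a ∨ 2 ^ (k + 1) ∣ c + a := by
  obtain ⟨e₁, he₁⟩ := hc.sub_odd ha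
  obtain ⟨e₂, he₂⟩ := hc.add_odd ha
  have hprod : 2 ^ k ∣ e₁ * e₂ := by
    have hfac : c ^ 2 - a ^ 2 = 2 ^ 2 * (e₁ * e₂) := by
      rw [sq_sub_sq, mul_comm, he₁, he₂]; ring
    rw [hfac, pow_add, mul_comm] at h
    exact (mul_dvd_mul_iff_left (by norm_num)).mp h
  have hsum : Odd (e₁ + e₂) := by
    convert hc using 1; omega
  rw [he₁, he₂, ← two_mul, ← two_mul, pow_succ']
  rcases Int.even_or_odd e₂ with he₂even | he₂odd
  · have he₁odd : Odd e₁ := Int.odd_add.mp hsum |>.mpr he₂even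
    exact .inr (mul_dvd_mul_left 2 (two_pow_dvd_of_odd_of_two_pow_dvd_mul he₁odd hprod))
  · exact .inl (mul_dvd_mul_left 2
      (two_pow_dvd_of_odd_of_two_pow_dvd_mul he₂odd (mul_comm e₁ e₂ ▸ hprod)))

end Int

theorem stmt_13_general (μ : ℕ) (a c : ℤ)
    (ha_odd : Odd a) (ha_pos : 0 < a) (ha_lt : a < 2 ^ (μ - 1))
    (hc_odd : Odd c) (hc_lt : |c| < 2 ^ μ)
    (hval : padicValInt 2 (c ^ 2 - a ^ 2) = μ + 1) :
    |c| = 2 ^ μ - a := by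
  obtain ⟨k, rfl⟩ : ∃ k, μ = k + 1 :=
    Nat.exists_eq_add_one.mpr (Nat.pos_of_ne_zero (by rintro rfl; simp at ha_lt; omega))
  rw [Nat.add_sub_cancel] at ha_lt
  have hN : (2 : ℤ) ^ (k + 1) = 2 * 2 ^ k := pow_succ' 2 k
  obtain ⟨hc_lo, hc_hi⟩ := abs_lt.mp hc_lt
  obtain ⟨hadd_ne, hsub_ne⟩ : c + a ≠ 0 ∧ c - a ≠ 0 := by
    refine mul_ne_zero_iff.mp fun h => ?_
    rw [sq_sub_sq, h, padicValInt.zero] at hval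
    omega
  have hdvd : 2 ^ (k + 2) ∣ c ^ 2 - a ^ 2 := hval ▸ padicValInt_dvd _
  have factor_eq_pm : ∀ x : ℤ, 2 ^ (k + 1) ∣ x → |x| < 2 ^ (k + 1) + a → x ≠ 0 →
      x = 2 ^ (k + 1) ∨ x = -2 ^ (k + 1) := fun x hx hlt hx0 => by
    have := Int.eq_zero_or_eq_or_eq_neg_of_dvd_of_abs_lt_two_mul hx (by linarith)
    tauto
  rw [abs_eq (by linarith)]
  rcases Int.two_pow_succ_dvd_sub_or_add_of_odd ha_odd hc_odd hdvd with h | h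
  · have := factor_eq_pm _ h (abs_lt.mpr ⟨by linarith, by linarith⟩) hsub_ne
    omega
  · have := factor_eq_pm _ h (abs_lt.mpr ⟨by linarith, by linarith⟩) hadd_ne
    omega

theorem stmt_13 (μ : ℕ) (hμ : 3 ≤ μ) (a c : ℤ)
    (ha_odd : Odd a) (ha_pos : 0 < a) (ha_lt : a < 2 ^ (μ - 1))
    (hc_odd : Odd c) (hc_lt : |c| < 2 ^ μ)
    (hval : padicValInt 2 (c ^ 2 - a ^ 2) = μ + 1) :
    |c| = 2 ^ μ - a :=
  stmt_13_general μ a c ha_odd ha_pos ha_lt hc_odd hc_lt hval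
end

section
/- Let p be a prime with p ≡ 1 (mod 8), μ = ⌈(1/2)log₂ p⌉, and let a be an odd integer with 0 < a < 2^(μ−1) and a² ≡ p (mod 2^(μ+1)). If there exists an integer c with 1 ≤ |c| < √p and ν₂(c² − p) > ν₂(a² − p), then either (2^μ − a)² < p and ν₂(p − (2^μ − a)²) > ν₂(p − a²), with the maximum of ν₂(t₀² − p) over 1 ≤ |t₀| < √p attained at t₀ = 2^μ − a; or the maximum is attained at t₀ = a. -/
/-!
Since `p ≤ 4 ^ μ`, every `t` with `t ^ 2 < p` has `|t| < 2 ^ μ`. Odd integers of absolute value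
below `2 ^ k` whose squares agree modulo `2 ^ (k + 2)` agree up to sign (write `x - y = 2s`,
`x + y = 2t`: one of `s, t` is odd, so `2 ^ k` divides the other, which must vanish). Hence a root
`x` with `ν₂(x² - p) ≥ μ + 2` maximises `ν₂(t² - p)`. Because `c` beats `a`, this forces
`ν₂(p - a²) = μ + 1`; expanding the square then gives `2 ^ (μ + 2) ∣ p - (2 ^ μ - a) ^ 2`, and
comparing with `c` once more shows `(2 ^ μ - a) ^ 2 < p`. So the first alternative always holds.
-/

lemma abs_lt_two_pow_ceil_logb {x : ℕ} {t : ℤ} (ht : t ^ 2 < x) :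
    |t| < 2 ^ ⌈Real.logb 2 x / 2⌉₊ := by
  have hx : 0 < x := by exact_mod_cast (sq_nonneg t).trans_lt ht
  have hlog : Real.logb 2 x ≤ ((2 * ⌈Real.logb 2 x / 2⌉₊ : ℕ) : ℝ) := by
    push_cast; linarith [Nat.le_ceil (Real.logb 2 x / 2)]
  rw [Real.logb_le_iff_le_rpow (by norm_num) (by positivity), Real.rpow_natCast] at hlog
  refine abs_lt_of_sq_lt_sq (ht.trans_le ?_) (by positivity)
  rw [← pow_mul, mul_comm]
  exact_mod_cast hlog

lemma sq_two_pow_lt_of_lt_ceil_logb {x n : ℕ} (h : n < ⌈Real.logb 2 x / 2⌉₊) :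
    (2 ^ n) ^ 2 < x := by
  have hlog : ((2 * n : ℕ) : ℝ) < Real.logb 2 x := by
    push_cast; linarith [Nat.lt_ceil.mp h]
  have hx : 0 < x := Nat.pos_of_ne_zero fun hx0 => by
    simp only [hx0, Nat.cast_zero, Real.logb_zero] at hlog
    exact hlog.not_ge (Nat.cast_nonneg _)
  rw [Real.lt_logb_iff_rpow_lt (by norm_num) (by positivity), Real.rpow_natCast] at hlog
  rw [← pow_mul, mul_comm]
  exact_mod_cast hlog

lemma padicValInt_sub_comm (p : ℕ) (x y : ℤ) :
    padicValInt p (x - y) = padicValInt p (y - x) := by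
  rw [padicValInt, padicValInt, ← neg_sub, Int.natAbs_neg]

lemma two_pow_dvd_iff_le_padicValInt {n : ℕ} {z : ℤ} (hz : z ≠ 0) :
    (2 : ℤ) ^ n ∣ z ↔ n ≤ padicValInt 2 z := by
  simpa [hz] using padicValInt_dvd_iff (p := 2) n z

lemma eq_zero_or_eq_zero_of_two_pow_dvd_mul {k : ℕ} {s t : ℤ} (hodd : Odd (s + t))
    (hdvd : 2 ^ k ∣ s * t) (hs : |s| < 2 ^ k) (ht : |t| < 2 ^ k) : s = 0 ∨ t = 0 := by
  rcases Int.even_or_odd s with hs_even | hs_odd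
  · have ht_odd : Odd t := by simpa using hodd.sub_even hs_even
    exact .inl <| Int.eq_zero_of_abs_lt_dvd
      ((Int.isCoprime_two_left.mpr ht_odd).pow_left.dvd_of_dvd_mul_right hdvd) hs
  · exact .inr <| Int.eq_zero_of_abs_lt_dvd
      ((Int.isCoprime_two_left.mpr hs_odd).pow_left.dvd_of_dvd_mul_left hdvd) ht

lemma eq_or_eq_neg_of_two_pow_dvd_sq_sub_sq {k : ℕ} {x y : ℤ} (hy : Odd y)
    (hx : |x| < 2 ^ k) (hyk : |y| < 2 ^ k) (hdvd : 2 ^ (k + 2) ∣ x ^ 2 - y ^ 2) :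
    x = y ∨ x = -y := by
  have hx_odd : Odd x := by
    have h2 : (2 : ℤ) ∣ x ^ 2 - y ^ 2 := (dvd_pow_self 2 (by omega)).trans hdvd
    have hsq : Odd (x ^ 2) := by
      simpa using (hy.pow (n := 2)).add_even (even_iff_two_dvd.mpr h2)
    exact (Int.odd_pow.mp hsq).resolve_right two_ne_zero
  obtain ⟨s, hs⟩ : Even (x - y) := hx_odd.sub_odd hy
  have hx_eq : x = s + s + y := by omega
  have hdvd_mul : 2 ^ k ∣ s * (s + y) := by
    have hsq : x ^ 2 - y ^ 2 = 2 ^ 2 * (s * (s + y)) := by rw [hx_eq]; ring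
    rw [hsq, pow_add, mul_comm] at hdvd
    exact (mul_dvd_mul_iff_left (by positivity)).mp hdvd
  have hs_lt : 2 * |s| < 2 * 2 ^ k := by
    calc 2 * |s| = |x - y| := by rw [hs, ← two_mul, abs_mul, abs_two]
    _ ≤ |x| + |y| := abs_sub _ _
    _ < 2 * 2 ^ k := by linarith
  have ht_lt : 2 * |s + y| < 2 * 2 ^ k := by
    calc 2 * |s + y| = |x + y| := by rw [hx_eq, ← abs_two, ← abs_mul]; ring_nf
    _ ≤ |x| + |y| := abs_add_le _ _
    _ < 2 * 2 ^ k := by linarith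
  have hodd : Odd (s + (s + y)) := by rwa [← add_assoc, ← hx_eq]
  rcases eq_zero_or_eq_zero_of_two_pow_dvd_mul hodd hdvd_mul (by linarith) (by linarith)
    with h | h <;> omega

lemma sq_eq_sq_of_two_pow_dvd_sq_sub {k : ℕ} {N x y : ℤ} (hy : Odd y) (hx : |x| < 2 ^ k)
    (hyk : |y| < 2 ^ k) (hxN : 2 ^ (k + 2) ∣ x ^ 2 - N) (hyN : 2 ^ (k + 2) ∣ y ^ 2 - N) :
    x ^ 2 = y ^ 2 :=
  sq_eq_sq_iff_eq_or_eq_neg.mpr <|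
    eq_or_eq_neg_of_two_pow_dvd_sq_sub_sq hy hx hyk (by simpa using dvd_sub hxN hyN)

lemma padicValInt_sq_sub_le {k : ℕ} {N x y : ℤ} (hy : Odd y) (hx : |x| < 2 ^ k)
    (hyk : |y| < 2 ^ k) (hval : k + 2 ≤ padicValInt 2 (y ^ 2 - N)) :
    padicValInt 2 (x ^ 2 - N) ≤ padicValInt 2 (y ^ 2 - N) := by
  by_contra! hlt
  set M := padicValInt 2 (y ^ 2 - N)
  have hM : M - 2 + 2 = M := by omega
  have hy_dvd : (2 : ℤ) ^ M ∣ y ^ 2 - N := by exact_mod_cast padicValInt_dvd (p := 2) _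
  have hx_dvd : (2 : ℤ) ^ M ∣ x ^ 2 - N :=
    (pow_dvd_pow 2 hlt.le).trans (by exact_mod_cast padicValInt_dvd (p := 2) _)
  have hmono : (2 : ℤ) ^ k ≤ 2 ^ (M - 2) := pow_le_pow_right₀ one_le_two (by omega)
  have hxy := sq_eq_sq_of_two_pow_dvd_sq_sub hy (hx.trans_le hmono) (hyk.trans_le hmono)
    (hM ▸ hx_dvd) (hM ▸ hy_dvd)
  rw [hxy] at hlt
  exact hlt.false

lemma two_pow_add_two_dvd_sub_sq_two_pow_sub {n : ℕ} (hn : 2 ≤ n) {N a : ℤ} (ha : Odd a)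
    (h1 : 2 ^ (n + 1) ∣ N - a ^ 2) (h2 : ¬ 2 ^ (n + 2) ∣ N - a ^ 2) :
    2 ^ (n + 2) ∣ N - (2 ^ n - a) ^ 2 := by
  obtain ⟨m, rfl⟩ : ∃ m, n = m + 2 := ⟨n - 2, by omega⟩
  obtain ⟨u, hu⟩ := h1
  have hu_odd : Odd u := by
    refine Int.not_even_iff_odd.mp fun ⟨r, hr⟩ => h2 ⟨r, ?_⟩
    rw [hu, hr]; ring
  obtain ⟨w, hw⟩ := hu_odd.add_odd ha
  -- `N - (2 ^ n - a) ^ 2 = 2 ^ (n + 1) * (u + a) - 2 ^ (2 * n)` with `u + a = 2 * w`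
  exact ⟨w - 2 ^ m, by linear_combination hu + 2 ^ (m + 3) * hw⟩

theorem stmt_14_general (p : ℕ)
    (μ : ℕ) (hμ : μ = ⌈Real.logb 2 p / 2⌉₊)
    (a : ℤ) (ha_odd : Odd a) (ha_pos : 0 < a) (ha_lt : a < 2 ^ (μ - 1))
    (ha_sq : (2 : ℤ) ^ (μ + 1) ∣ ((p : ℤ) - a ^ 2))
    (hc : ∃ c : ℤ, 1 ≤ |c| ∧ c ^ 2 < (p : ℤ) ∧
      padicValInt 2 (a ^ 2 - p) < padicValInt 2 (c ^ 2 - p)) :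
    ((2 ^ μ - a) ^ 2 < (p : ℤ) ∧
      padicValInt 2 ((p : ℤ) - a ^ 2) < padicValInt 2 ((p : ℤ) - (2 ^ μ - a) ^ 2) ∧
      ∀ t₀ : ℤ, 1 ≤ |t₀| → t₀ ^ 2 < (p : ℤ) →
        padicValInt 2 (t₀ ^ 2 - p) ≤ padicValInt 2 ((2 ^ μ - a) ^ 2 - p)) ∨
    (∀ t₀ : ℤ, 1 ≤ |t₀| → t₀ ^ 2 < (p : ℤ) →
      padicValInt 2 (t₀ ^ 2 - p) ≤ padicValInt 2 (a ^ 2 - p)) := by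
  obtain ⟨c, -, hc_lt, hc_val⟩ := hc
  have hμ2 : 2 ≤ μ := by
    by_contra! h
    rw [Nat.sub_eq_zero_of_le (by omega : μ ≤ 1), pow_zero] at ha_lt
    omega
  have hroot : ∀ t : ℤ, t ^ 2 < p → |t| < 2 ^ μ := fun t ht => hμ ▸ abs_lt_two_pow_ceil_logb ht
  have ha_sq_lt : a ^ 2 < p := by
    have hp_gt : ((2 ^ (μ - 1)) ^ 2 : ℤ) < p := by
      exact_mod_cast sq_two_pow_lt_of_lt_ceil_logb (x := p) (n := μ - 1) (by rw [← hμ]; omega)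
    exact (pow_lt_pow_left₀ ha_lt ha_pos.le two_ne_zero).trans hp_gt
  have ha_abs : |a| < 2 ^ μ := hroot a ha_sq_lt
  have ha_val : μ + 1 ≤ padicValInt 2 (a ^ 2 - p) := by
    rwa [padicValInt_sub_comm, ← two_pow_dvd_iff_le_padicValInt (by omega)]
  have ha_sharp : ¬ 2 ^ (μ + 2) ∣ (p : ℤ) - a ^ 2 := fun h =>
    hc_val.not_ge <| padicValInt_sq_sub_le ha_odd (hroot c hc_lt) ha_abs <| by
      rwa [padicValInt_sub_comm, ← two_pow_dvd_iff_le_padicValInt (by omega)]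
  set b := 2 ^ μ - a
  have hb_dvd : 2 ^ (μ + 2) ∣ (p : ℤ) - b ^ 2 :=
    two_pow_add_two_dvd_sub_sq_two_pow_sub hμ2 ha_odd ha_sq ha_sharp
  have hb_odd : Odd b := (Int.even_pow.mpr ⟨even_two, by omega⟩).sub_odd ha_odd
  have hb_abs : |b| < 2 ^ μ := by
    rw [abs_lt] at ha_abs ⊢; constructor <;> omega
  have hb_sq_lt : b ^ 2 < p := by
    by_contra! hge
    have hc_dvd : (2 : ℤ) ^ (μ + 2) ∣ c ^ 2 - p := by
      rw [two_pow_dvd_iff_le_padicValInt (by omega)]; omega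
    have hcb := sq_eq_sq_of_two_pow_dvd_sq_sub hb_odd (hroot c hc_lt) hb_abs hc_dvd
      (dvd_sub_comm.mp hb_dvd)
    omega
  have hb_val : μ + 2 ≤ padicValInt 2 (b ^ 2 - p) := by
    rwa [padicValInt_sub_comm, ← two_pow_dvd_iff_le_padicValInt (by omega)]
  refine .inl ⟨hb_sq_lt, ?_, fun t _ ht => padicValInt_sq_sub_le hb_odd (hroot t ht) hb_abs hb_val⟩
  rw [two_pow_dvd_iff_le_padicValInt (by omega)] at ha_sharp
  rw [padicValInt_sub_comm _ _ (b ^ 2)]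
  omega

theorem stmt_14 (p : ℕ) (hp : p.Prime) (hp8 : p % 8 = 1)
    (μ : ℕ) (hμ : μ = ⌈Real.logb 2 p / 2⌉₊)
    (a : ℤ) (ha_odd : Odd a) (ha_pos : 0 < a) (ha_lt : a < 2 ^ (μ - 1))
    (ha_sq : (2 : ℤ) ^ (μ + 1) ∣ ((p : ℤ) - a ^ 2))
    (hc : ∃ c : ℤ, 1 ≤ |c| ∧ c ^ 2 < (p : ℤ) ∧
      padicValInt 2 (a ^ 2 - p) < padicValInt 2 (c ^ 2 - p)) :
    ((2 ^ μ - a) ^ 2 < (p : ℤ) ∧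
      padicValInt 2 ((p : ℤ) - a ^ 2) < padicValInt 2 ((p : ℤ) - (2 ^ μ - a) ^ 2) ∧
      ∀ t₀ : ℤ, 1 ≤ |t₀| → t₀ ^ 2 < (p : ℤ) →
        padicValInt 2 (t₀ ^ 2 - p) ≤ padicValInt 2 ((2 ^ μ - a) ^ 2 - p)) ∨
    (∀ t₀ : ℤ, 1 ≤ |t₀| → t₀ ^ 2 < (p : ℤ) →
      padicValInt 2 (t₀ ^ 2 - p) ≤ padicValInt 2 (a ^ 2 - p)) :=
  stmt_14_general p μ hμ a ha_odd ha_pos ha_lt ha_sq hc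
end

section
/- Let p be a prime with p ≡ 1 (mod 8) and μ = ⌈(1/2)log₂ p⌉. Then there exists an integer t₀ with 1 ≤ |t₀| < √p such that ν₂(t₀² − p) ≥ μ + 1. Consequently the maximum of ν₂(t² − 4p) over integers t with 1 ≤ |t| ≤ 2√p and p ∤ t is at least μ + 3. -/
/-!
An integer `p ≡ 1 (mod 8)` is a square modulo every power of two: if `a ^ 2 ≡ p` modulo `2 ^ k`
but not modulo `2 ^ (k + 1)`, then `a + 2 ^ (k - 1)` is a root modulo `2 ^ (k + 1)`. A root
modulo `2 ^ (μ + 1)` only matters modulo `2 ^ μ`, so its balanced residue `t₀` satisfies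
`|t₀| < 2 ^ (μ - 1)`, whence `t₀ ^ 2 < 4 ^ (μ - 1) < p` by the choice of `μ`. Doubling `t₀` gains
two more factors of `2` in `t ^ 2 - 4 p`, and `|2 t₀| < p` keeps `t = 2 t₀` prime to `p`.
-/

lemma two_pow_succ_dvd_add_two_pow_mul_odd {x a : ℤ} {k : ℕ} (hx : 2 ^ k ∣ x)
    (hx' : ¬ 2 ^ (k + 1) ∣ x) (ha : Odd a) : 2 ^ (k + 1) ∣ x + 2 ^ k * a := by
  obtain ⟨m, rfl⟩ := hx
  have hm : Odd m := by
    refine Int.not_even_iff_odd.mp fun ⟨r, hr⟩ => hx' ⟨r, ?_⟩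
    rw [hr, pow_succ]; ring
  obtain ⟨r, hr⟩ := hm.add_odd ha
  exact ⟨r, by rw [← mul_add, hr, pow_succ]; ring⟩

lemma exists_odd_sq_sub_dvd_two_pow {p : ℤ} (hp : p % 8 = 1) (k : ℕ) :
    ∃ a : ℤ, Odd a ∧ 2 ^ (k + 3) ∣ a ^ 2 - p := by
  induction k with
  | zero => exact ⟨1, odd_one, by norm_num; omega⟩
  | succ k ih =>
    obtain ⟨a, ha, hdvd⟩ := ih
    by_cases hdvd' : 2 ^ (k + 4) ∣ a ^ 2 - p
    · exact ⟨a, ha, hdvd'⟩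
    refine ⟨a + 2 ^ (k + 2), ha.add_even (Int.even_pow.mpr ⟨even_two, by omega⟩), ?_⟩
    have hexpand : (a + 2 ^ (k + 2)) ^ 2 - p =
        (a ^ 2 - p + 2 ^ (k + 3) * a) + 2 ^ (k + 4) * 2 ^ k := by
      ring
    rw [hexpand]
    exact dvd_add (two_pow_succ_dvd_add_two_pow_mul_odd hdvd hdvd' ha) (dvd_mul_right _ _)

lemma pow_succ_dvd_sq_sub_sq_of_odd {a c : ℤ} {n : ℕ} (ha : Odd a) (hc : Odd c)
    (h : 2 ^ n ∣ c - a) : 2 ^ (n + 1) ∣ c ^ 2 - a ^ 2 := by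
  rw [sq_sub_sq, pow_succ']
  exact mul_dvd_mul (even_iff_two_dvd.mp (hc.add_odd ha)) h

lemma exists_odd_abs_lt_two_pow_sq_sub_dvd {p a : ℤ} {n : ℕ} (hn : 1 ≤ n) (ha : Odd a)
    (h : 2 ^ (n + 2) ∣ a ^ 2 - p) : ∃ c : ℤ, Odd c ∧ |c| < 2 ^ n ∧ 2 ^ (n + 2) ∣ c ^ 2 - p := by
  set c := a.bmod (2 ^ (n + 1))
  have hca : (2 : ℤ) ^ (n + 1) ∣ c - a := by
    have := (Int.bmod_emod (x := a) (m := 2 ^ (n + 1))).symm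
    push_cast at this
    exact Int.ModEq.dvd this
  have hc : Odd c := by
    have : Even (c - a) := even_iff_two_dvd.mpr ((dvd_pow_self 2 (by omega)).trans hca)
    simpa using this.add_odd ha
  have hlo := Int.le_bmod (x := a) (m := 2 ^ (n + 1)) (by positivity)
  have hhi := Int.bmod_lt (x := a) (m := 2 ^ (n + 1)) (by positivity)
  have hM : ((2 ^ (n + 1) : ℕ) : ℤ) = 2 * 2 ^ n := by push_cast; ring
  have hMeven : Even ((2 : ℤ) ^ n) := Int.even_pow.mpr ⟨even_two, by omega⟩
  rw [hM] at hlo hhi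
  have hne : c ≠ -2 ^ n := fun h => by
    rw [h] at hc; exact Int.not_even_iff_odd.mpr hc hMeven.neg
  refine ⟨c, hc, abs_lt.mpr ⟨by omega, by omega⟩, ?_⟩
  have := dvd_add (pow_succ_dvd_sq_sub_sq_of_odd ha hc hca) h
  rwa [sub_add_sub_cancel] at this

lemma two_le_ceil_half_logb_two {p : ℕ} (hp : 4 < p) : 2 ≤ ⌈Real.logb 2 p / 2⌉₊ := by
  have h : (2 : ℝ) < Real.logb 2 p := by
    rw [Real.lt_logb_iff_rpow_lt one_lt_two (by positivity)]
    norm_num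
    exact_mod_cast hp
  exact Nat.lt_ceil.mpr (by push_cast; linarith)

lemma four_pow_ceil_half_logb_two_sub_one_lt {p : ℕ} (hp : 1 < p) :
    4 ^ (⌈Real.logb 2 p / 2⌉₊ - 1) < p := by
  set μ := ⌈Real.logb 2 p / 2⌉₊
  have hlog : 0 < Real.logb 2 p := Real.logb_pos one_lt_two (by exact_mod_cast hp)
  have hμ : (μ : ℝ) < Real.logb 2 p / 2 + 1 := Nat.ceil_lt_add_one (by positivity)
  have hlt : ((2 * (μ - 1) : ℕ) : ℝ) < Real.logb 2 p := by
    have : 1 ≤ μ := Nat.one_le_iff_ne_zero.mpr (Nat.ceil_pos.mpr (by positivity)).ne'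
    push_cast [this]
    linarith
  rw [Real.lt_logb_iff_rpow_lt one_lt_two (by positivity), Real.rpow_natCast] at hlt
  rw [show 4 = 2 ^ 2 from rfl, ← pow_mul]
  exact_mod_cast hlt

lemma le_padicValInt_of_pow_dvd {p : ℕ} [Fact p.Prime] {x : ℤ} {k : ℕ} (hx : x ≠ 0)
    (h : (p : ℤ) ^ k ∣ x) : k ≤ padicValInt p x :=
  ((padicValInt_dvd_iff k x).mp h).resolve_left hx

lemma not_dvd_two_mul_of_sq_lt {p c : ℤ} (hp : 4 ≤ p) (hc : c ≠ 0) (hcp : c ^ 2 < p) :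
    ¬ p ∣ 2 * c := by
  intro h
  have : p ≤ |2 * c| := Int.le_of_dvd (by positivity) ((dvd_abs _ _).mpr h)
  rw [abs_mul, abs_two] at this
  nlinarith [sq_abs c, abs_nonneg c]

theorem stmt_15 (p : ℕ) (hp : p.Prime) (hp8 : p % 8 = 1)
    (μ : ℕ) (hμ : μ = ⌈Real.logb 2 p / 2⌉₊) :
    (∃ t₀ : ℤ, 1 ≤ |t₀| ∧ t₀ ^ 2 < (p : ℤ) ∧
      μ + 1 ≤ padicValInt 2 (t₀ ^ 2 - p)) ∧
    (∃ t : ℤ, 1 ≤ |t| ∧ t ^ 2 ≤ 4 * (p : ℤ) ∧ ¬ (p : ℤ) ∣ t ∧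
      μ + 3 ≤ padicValInt 2 (t ^ 2 - 4 * p)) := by
  have : Fact (Nat.Prime 2) := ⟨Nat.prime_two⟩
  have hp9 : 9 ≤ p := by have := hp.one_lt; omega
  have hμ2 : 2 ≤ μ := hμ ▸ two_le_ceil_half_logb_two (by omega)
  have hμp : 4 ^ (μ - 1) < p := hμ ▸ four_pow_ceil_half_logb_two_sub_one_lt hp.one_lt
  obtain ⟨a, ha, hap⟩ := exists_odd_sq_sub_dvd_two_pow (p := p) (by omega) (μ - 2)
  rw [show μ - 2 + 3 = μ - 1 + 2 by omega] at hap
  obtain ⟨c, hc, hc_lt, hcp⟩ := exists_odd_abs_lt_two_pow_sq_sub_dvd (by omega) ha hap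
  rw [show μ - 1 + 2 = μ + 1 by omega] at hcp
  have hc0 : c ≠ 0 := by rintro rfl; simp at hc
  have hc2 : c ^ 2 < p := calc
    c ^ 2 = |c| ^ 2 := (sq_abs c).symm
    _ < (2 ^ (μ - 1)) ^ 2 := by gcongr
    _ = 4 ^ (μ - 1) := by rw [← pow_mul, mul_comm, pow_mul]; norm_num
    _ < p := by exact_mod_cast hμp
  refine ⟨⟨c, Int.one_le_abs hc0, hc2, le_padicValInt_of_pow_dvd (by omega) (by exact_mod_cast hcp)⟩,
    ⟨2 * c, Int.one_le_abs (by omega), by nlinarith, not_dvd_two_mul_of_sq_lt (by omega) hc0 hc2,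
      le_padicValInt_of_pow_dvd (by nlinarith) ?_⟩⟩
  have hexpand : (2 * c) ^ 2 - 4 * p = 2 ^ 2 * (c ^ 2 - p) := by ring
  rw [hexpand, show μ + 3 = 2 + (μ + 1) by omega, pow_add]
  exact_mod_cast mul_dvd_mul_left _ hcp
end

section
/- Let p be an odd prime, t an integer with 1 ≤ |t| < 2p, and suppose e := ν₂(t² − 4p²) ≥ 2. Then t = 2t₀ with 1 ≤ |t₀| < p, and there exists a sign ε ∈ {±1} and an integer b > 0 with p + ε·t₀ = 2^(e−3)·b if e ≥ 3; in particular 2^(e−3) < 2p. -/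
/-!
Since `e ≥ 2`, `4 ∣ t²`, so `t = 2 t₀` and `t² - 4p² = -4 (p + t₀)(p - t₀)` with both factors
positive and below `2p`. Their sum `2p` is `2 mod 4`, so they cannot both be divisible by `4`;
as their product is divisible by `2^(e-2)`, one of them is divisible by `2^(e-3)`.
-/

lemma Int.two_pow_dvd_or_two_pow_dvd_of_two_pow_succ_dvd_mul {a b : ℤ} {k : ℕ}
    (hab : ¬ 4 ∣ a + b) (h : 2 ^ (k + 1) ∣ a * b) : 2 ^ k ∣ a ∨ 2 ^ k ∣ b := by
  have : Fact (Nat.Prime 2) := ⟨Nat.prime_two⟩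
  rcases eq_or_ne a 0 with rfl | ha
  · exact .inl (dvd_zero _)
  rcases eq_or_ne b 0 with rfl | hb
  · exact .inr (dvd_zero _)
  have hdvd_iff (n : ℕ) (c : ℤ) (hc : c ≠ 0) : 2 ^ n ∣ c ↔ n ≤ padicValInt 2 c := by
    simpa [hc] using padicValInt_dvd_iff (p := 2) n c
  have hval : k + 1 ≤ padicValInt 2 a + padicValInt 2 b := by
    rw [← padicValInt.mul ha hb, ← hdvd_iff _ _ (mul_ne_zero ha hb)]
    exact h
  have hmin : padicValInt 2 a ≤ 1 ∨ padicValInt 2 b ≤ 1 := by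
    by_contra! hge
    exact hab (dvd_add ((hdvd_iff 2 a ha).mpr hge.1) ((hdvd_iff 2 b hb).mpr hge.2))
  rcases hmin with h1 | h1
  · exact .inr ((hdvd_iff k b hb).mpr (by omega))
  · exact .inl ((hdvd_iff k a ha).mpr (by omega))

lemma Int.two_dvd_of_four_dvd_sq_sub {t m : ℤ} (h : 4 ∣ t ^ 2 - 4 * m) : 2 ∣ t := by
  have h4 : 4 ∣ t ^ 2 := by simpa using dvd_add h (dvd_mul_right 4 m)
  exact Int.prime_two.dvd_of_dvd_pow (dvd_trans ⟨2, by norm_num⟩ h4)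

lemma Int.exists_pos_eq_mul_and_lt_of_dvd {d c n : ℤ} (hd : 0 < d) (hc : 0 < c) (hcn : c < n)
    (h : d ∣ c) : (∃ b, 0 < b ∧ c = d * b) ∧ d < n := by
  obtain ⟨b, rfl⟩ := h
  exact ⟨⟨b, pos_of_mul_pos_right hc hd.le, rfl⟩,
    (Int.le_of_dvd hc (dvd_mul_right d b)).trans_lt hcn⟩

theorem stmt_17_general (p : ℕ) (hodd : Odd p) (t : ℤ)
    (ht1 : 1 ≤ |t|) (ht2 : |t| < 2 * p)
    (e : ℕ) (he : e = padicValInt 2 (t ^ 2 - 4 * (p : ℤ) ^ 2)) (he2 : 2 ≤ e) :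
    ∃ t₀ : ℤ, t = 2 * t₀ ∧ 1 ≤ |t₀| ∧ |t₀| < p ∧
      (3 ≤ e → (∃ ε : ℤ, (ε = 1 ∨ ε = -1) ∧ ∃ b : ℤ, 0 < b ∧
        (p : ℤ) + ε * t₀ = 2 ^ (e - 3) * b) ∧ (2 : ℤ) ^ (e - 3) < 2 * p) := by
  have hdvd : (2 : ℤ) ^ e ∣ t ^ 2 - 4 * (p : ℤ) ^ 2 := by
    have : Fact (Nat.Prime 2) := ⟨Nat.prime_two⟩
    exact_mod_cast he ▸ padicValInt_dvd (p := 2) _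
  obtain ⟨t₀, rfl⟩ : 2 ∣ t :=
    Int.two_dvd_of_four_dvd_sq_sub (dvd_trans (pow_dvd_pow 2 he2) hdvd)
  rw [abs_mul, abs_two] at ht1 ht2
  refine ⟨t₀, rfl, by omega, by omega, fun he3 => ?_⟩
  have hprod : 2 ^ (e - 3 + 1) ∣ ((p : ℤ) + t₀) * (p - t₀) := by
    rw [show e = e - 3 + 1 + 2 by omega, pow_add] at hdvd
    exact (mul_dvd_mul_iff_right (by norm_num : (2 : ℤ) ^ 2 ≠ 0)).mp
      (by simpa [show (2 * t₀) ^ 2 - 4 * (p : ℤ) ^ 2 = -((p + t₀) * (p - t₀) * 2 ^ 2) by ring]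
        using hdvd)
  have hsum : ¬ 4 ∣ ((p : ℤ) + t₀) + (p - t₀) := by
    obtain ⟨k, rfl⟩ := hodd
    push_cast
    omega
  obtain ⟨hlo, hhi⟩ := abs_lt.mp (by omega : |t₀| < p)
  rcases Int.two_pow_dvd_or_two_pow_dvd_of_two_pow_succ_dvd_mul hsum hprod with h | h
  · obtain ⟨hb, hlt⟩ := Int.exists_pos_eq_mul_and_lt_of_dvd (by positivity) (by linarith)
      (by linarith : (p : ℤ) + t₀ < 2 * p) h
    exact ⟨⟨1, .inl rfl, by simpa using hb⟩, hlt⟩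
  · obtain ⟨hb, hlt⟩ := Int.exists_pos_eq_mul_and_lt_of_dvd (by positivity) (by linarith)
      (by linarith : (p : ℤ) - t₀ < 2 * p) h
    exact ⟨⟨-1, .inr rfl, by simpa [← sub_eq_add_neg] using hb⟩, hlt⟩

theorem stmt_17 (p : ℕ) (hp : p.Prime) (hodd : Odd p) (t : ℤ)
    (ht1 : 1 ≤ |t|) (ht2 : |t| < 2 * p)
    (e : ℕ) (he : e = padicValInt 2 (t ^ 2 - 4 * (p : ℤ) ^ 2)) (he2 : 2 ≤ e) :
    ∃ t₀ : ℤ, t = 2 * t₀ ∧ 1 ≤ |t₀| ∧ |t₀| < p ∧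
      (3 ≤ e → (∃ ε : ℤ, (ε = 1 ∨ ε = -1) ∧ ∃ b : ℤ, 0 < b ∧
        (p : ℤ) + ε * t₀ = 2 ^ (e - 3) * b) ∧ (2 : ℤ) ^ (e - 3) < 2 * p) :=
  stmt_17_general p hodd t ht1 ht2 e he he2
end
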